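/- Let q be a prime power and n ≥ 1 an integer, and let π_n be the number of monic irreducible polynomials of degree n in 𝔽_q[x]. Then |n·π_n − q^n| ≤ Σ_{k | n, k ≤ n/2} q^k ≤ 2·q^{n/2}. -/

import Mathlib

/-!
Over `𝔽_q` the polynomial `X ^ q ^ n - X` is separable, and its monic irreducible factors are
exactly the monic irreducibles whose degree divides `n`. Comparing degrees gives Gauss's formula
`∑_{d ∣ n} d π_d = q ^ n`, so `q ^ n - n π_n` is the contribution of the proper divisors, each
bounded by `d π_d ≤ q ^ d`. Proper divisors are at most `n / 2`, and for `q ≥ 2` a geometric sum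
is at most twice its last term.
-/

open Finset Polynomial UniqueFactorizationMonoid

namespace Polynomial

noncomputable def monicIrreducibleCount (K : Type*) [Semiring K] (d : ℕ) : ℕ :=
  {p : K[X] | p.Monic ∧ Irreducible p ∧ p.natDegree = d}.ncard

theorem natDegree_eq_sum_natDegree_normalizedFactors {K : Type*} [Field K] [DecidableEq K]
    {f : K[X]} (hf : f ≠ 0) : f.natDegree = ((normalizedFactors f).map natDegree).sum := by
  rw [← natDegree_multiset_prod _ (zero_notMem_normalizedFactors f),
    prod_normalizedFactors_eq hf, natDegree_eq_of_degree_eq degree_normalize]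

end Polynomial

namespace FiniteField

variable {K : Type*} [Field K] [Fintype K] {n : ℕ}

theorem X_pow_card_pow_sub_X_separable (hn : n ≠ 0) :
    (X ^ Fintype.card K ^ n - X : K[X]).Separable := by
  obtain ⟨p, hp⟩ := CharP.exists K
  have : Fact p.Prime := ⟨CharP.char_is_prime K p⟩
  obtain ⟨m, -, hcard⟩ := FiniteField.card K p
  refine galois_poly_separable p _ ?_
  rw [hcard, ← pow_mul]
  exact dvd_pow_self p (mul_ne_zero m.ne_zero hn)

theorem mem_normalizedFactors_X_pow_card_pow_sub_X [DecidableEq K] {g : K[X]} (hn : n ≠ 0) :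
    g ∈ normalizedFactors (X ^ Fintype.card K ^ n - X) ↔
      g.Monic ∧ Irreducible g ∧ g.natDegree ∣ n := by
  rw [Polynomial.mem_normalizedFactors_iff
    (X_pow_card_pow_sub_X_ne_zero K hn Fintype.one_lt_card), Fintype.card_eq_nat_card]
  constructor
  · rintro ⟨hirr, hmonic, hdvd⟩
    exact ⟨hmonic, hirr, hirr.natDegree_dvd_of_dvd_X_pow_card_pow_sub_X hdvd⟩
  · rintro ⟨hmonic, hirr, hdvd⟩
    exact ⟨hirr, hmonic, hirr.natDegree_dvd_iff_dvd_X_pow_card_pow_sub_X.mp hdvd⟩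

theorem sum_divisors_mul_monicIrreducibleCount (hn : n ≠ 0) :
    ∑ d ∈ n.divisors, d * monicIrreducibleCount K d = Fintype.card K ^ n := by
  classical
  set P : K[X] := X ^ Fintype.card K ^ n - X
  have hP : P ≠ 0 := X_pow_card_pow_sub_X_ne_zero K hn Fintype.one_lt_card
  have hnodup : (normalizedFactors P).Nodup :=
    (squarefree_iff_nodup_normalizedFactors hP).mp (X_pow_card_pow_sub_X_separable hn).squarefree
  set T := (normalizedFactors P).toFinset
  have hmem : ∀ g, g ∈ T ↔ g.Monic ∧ Irreducible g ∧ g.natDegree ∣ n := fun g => by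
    rw [Multiset.mem_toFinset, mem_normalizedFactors_X_pow_card_pow_sub_X hn]
  have hcount : ∀ d ∈ n.divisors, monicIrreducibleCount K d = #{g ∈ T | g.natDegree = d} := by
    intro d hd
    rw [monicIrreducibleCount, ← Set.ncard_coe_finset]
    congr 1
    ext g
    simp only [Set.mem_ofPred_eq, coe_filter, hmem]
    grind [Nat.dvd_of_mem_divisors]
  have hdeg : ∑ g ∈ T, g.natDegree = Fintype.card K ^ n := by
    rw [← X_pow_card_pow_sub_X_natDegree_eq K hn Fintype.one_lt_card,
      natDegree_eq_sum_natDegree_normalizedFactors hP, sum_eq_multiset_sum,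
      Multiset.toFinset_val, hnodup.dedup]
  rw [← hdeg, ← sum_fiberwise_of_maps_to (t := n.divisors) (g := natDegree)
    (fun g hg => Nat.mem_divisors.mpr ⟨((hmem g).mp hg).2.2, hn⟩)]
  refine sum_congr rfl fun d hd => ?_
  rw [hcount d hd, sum_congr rfl fun g hg => (mem_filter.mp hg).2, sum_const,
    smul_eq_mul, mul_comm]

theorem mul_monicIrreducibleCount_le (hn : n ≠ 0) :
    n * monicIrreducibleCount K n ≤ Fintype.card K ^ n := by
  rw [← sum_divisors_mul_monicIrreducibleCount hn]
  exact single_le_sum (f := fun d => d * monicIrreducibleCount K d) (fun _ _ => Nat.zero_le _)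
    (Nat.mem_divisors_self n hn)

theorem sum_properDivisors_mul_monicIrreducibleCount_add (hn : n ≠ 0) :
    ∑ d ∈ n.properDivisors, d * monicIrreducibleCount K d + n * monicIrreducibleCount K n =
      Fintype.card K ^ n := by
  rw [← sum_divisors_mul_monicIrreducibleCount hn, ← Nat.insert_self_properDivisors hn,
    sum_insert Nat.self_notMem_properDivisors, add_comm]

end FiniteField

theorem Nat.two_mul_le_of_mem_properDivisors {n k : ℕ} (hk : k ∈ n.properDivisors) :
    2 * k ≤ n := by
  obtain ⟨⟨c, rfl⟩, hlt⟩ := Nat.mem_properDivisors.mp hk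
  have : 2 ≤ c := by
    by_contra! hc
    interval_cases c <;> simp_all
  nlinarith

theorem Nat.filter_two_mul_le_divisors (n : ℕ) :
    n.divisors.filter (fun k => 2 * k ≤ n) = n.properDivisors := by
  ext k
  refine ⟨fun hk => ?_, fun hk => ?_⟩
  · obtain ⟨hk, h2k⟩ := mem_filter.mp hk
    have := Nat.pos_of_mem_divisors hk
    exact Nat.mem_properDivisors.mpr ⟨Nat.dvd_of_mem_divisors hk, by omega⟩
  · exact mem_filter.mpr ⟨Nat.properDivisors_subset_divisors hk,
      Nat.two_mul_le_of_mem_properDivisors hk⟩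

theorem sum_range_succ_pow_le_two_mul_pow {R : Type*} [Semiring R] [PartialOrder R]
    [IsOrderedRing R] {x : R} (hx : 2 ≤ x) (m : ℕ) :
    ∑ k ∈ range (m + 1), x ^ k ≤ 2 * x ^ m := by
  induction m with
  | zero => simp [one_le_two]
  | succ m ih =>
    rw [sum_range_succ]
    calc ∑ k ∈ range (m + 1), x ^ k + x ^ (m + 1) ≤ 2 * x ^ m + x ^ (m + 1) := by gcongr
      _ ≤ x ^ (m + 1) + x ^ (m + 1) := by
        rw [pow_succ' x m]
        gcongr
        exact pow_nonneg (zero_le_two.trans hx) m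
      _ = 2 * x ^ (m + 1) := (two_mul _).symm

theorem sum_properDivisors_pow_le_two_mul_rpow {x : ℝ} (hx : 2 ≤ x) (n : ℕ) :
    ∑ k ∈ n.properDivisors, x ^ k ≤ 2 * x ^ ((n : ℝ) / 2) := by
  have hsub : n.properDivisors ⊆ range (n / 2 + 1) := fun k hk => by
    have := Nat.two_mul_le_of_mem_properDivisors hk
    exact mem_range.mpr (by omega)
  calc ∑ k ∈ n.properDivisors, x ^ k ≤ ∑ k ∈ range (n / 2 + 1), x ^ k :=
        sum_le_sum_of_subset_of_nonneg hsub fun _ _ _ => by positivity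
    _ ≤ 2 * x ^ (n / 2) := sum_range_succ_pow_le_two_mul_pow hx _
    _ ≤ 2 * x ^ ((n : ℝ) / 2) := by
      rw [← Real.rpow_natCast]
      gcongr
      · linarith
      · exact Nat.cast_div_le

theorem irreducible_count_estimate_general
    {F : Type*} [Field F] [Fintype F] (q n : ℕ)
    (hcardF : Fintype.card F = q) (hn : 1 ≤ n) :
    |((n * {p : Polynomial F | p.Monic ∧ Irreducible p ∧ p.natDegree = n}.ncard : ℕ) : ℝ)
        - (q : ℝ) ^ n|
      ≤ ∑ k ∈ n.divisors.filter (fun k => 2 * k ≤ n), (q : ℝ) ^ k ∧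
    (∑ k ∈ n.divisors.filter (fun k => 2 * k ≤ n), (q : ℝ) ^ k)
      ≤ 2 * (q : ℝ) ^ ((n : ℝ) / 2) := by
  subst hcardF
  have hn0 : n ≠ 0 := Nat.one_le_iff_ne_zero.mp hn
  have hgauss := congr_arg (Nat.cast (R := ℝ))
    (FiniteField.sum_properDivisors_mul_monicIrreducibleCount_add (K := F) hn0)
  push_cast at hgauss
  rw [Nat.filter_two_mul_le_divisors]
  refine ⟨?_, sum_properDivisors_pow_le_two_mul_rpow (mod_cast Fintype.one_lt_card) n⟩
  calc _ = ∑ d ∈ n.properDivisors, (d * monicIrreducibleCount F d : ℝ) := by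
        rw [← hgauss, Nat.cast_mul, monicIrreducibleCount, sub_add_cancel_right,
          abs_neg, abs_of_nonneg (by positivity)]
    _ ≤ _ := sum_le_sum fun d hd => mod_cast
        FiniteField.mul_monicIrreducibleCount_le (Nat.pos_of_mem_properDivisors hd).ne'

/-- Bound on the count `π_n` of monic irreducible polynomials of degree `n` over `𝔽_q`:
`|n·π_n − q^n| ≤ Σ_{k ∣ n, k ≤ n/2} q^k ≤ 2·q^{n/2}`. -/
theorem irreducible_count_estimate
    {F : Type*} [Field F] [Fintype F] (q n : ℕ) (hq : IsPrimePow q)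
    (hcardF : Fintype.card F = q) (hn : 1 ≤ n) :
    |((n * {p : Polynomial F | p.Monic ∧ Irreducible p ∧ p.natDegree = n}.ncard : ℕ) : ℝ)
        - (q : ℝ) ^ n|
      ≤ ∑ k ∈ n.divisors.filter (fun k => 2 * k ≤ n), (q : ℝ) ^ k ∧
    (∑ k ∈ n.divisors.filter (fun k => 2 * k ≤ n), (q : ℝ) ^ k)
      ≤ 2 * (q : ℝ) ^ ((n : ℝ) / 2) :=
  irreducible_count_estimate_general q n hcardF hn
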